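/- Cut-free RS4 is sound with respect to PS4 models: if a hypersequent H has a cut-free derivation in RS4, then H has no countermodel in any PS4 model. -/
import Mathlib


inductive Fm where
  | atom : ℕ → Fm
  | neg : Fm → Fm
  | and : Fm → Fm → Fm
  | or : Fm → Fm → Fm
  | box : Fm → Fm
deriving DecidableEq

def skAnd : Option Bool → Option Bool → Option Bool
  | some false, _ => some false
  | _, some false => some false
  | some true, some true => some true
  | _, _ => none

def skOr : Option Bool → Option Bool → Option Bool
  | some true, _ => some true
  | _, some true => some true
  | some false, some false => some false
  | _, _ => none

open Classical in
/-- Three-valued Strong Kleene evaluation (`some true` = 1, `some false` = 0, `none` = *). -/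
noncomputable def Eval {W : Type} (R : W → W → Prop) (v : W → ℕ → Option Bool) :
    Fm → W → Option Bool
  | .atom n, x => v x n
  | .neg φ, x => (Eval R v φ x).map (!·)
  | .and φ ψ, x => skAnd (Eval R v φ x) (Eval R v ψ x)
  | .or φ ψ, x => skOr (Eval R v φ x) (Eval R v ψ x)
  | .box φ, x =>
      if ∀ y, R x y → Eval R v φ y = some true then some true
      else if ∃ y, R x y ∧ Eval R v φ y = some false then some false
      else none

/-- A sequent is a pair of finite sets of formulas. -/
abbrev HSeq := Finset Fm × Finset Fm
/-- A hypersequent is a finite list of sequents. -/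
abbrev Hyp := List HSeq

/-- Hypersequent derivability, parametrized by which optional rules are present:
`cut` = the Cut rule, `ec` = external contraction, `ew` = insertion of an empty
sequent anywhere, `sym` = reversal of the hypersequent, `t` = the T rule. The
base rules (Id, EWL, EWR, TL, TR, ¬, ∧, ∨, □L, □R) are always present. -/
inductive Der (cut ec ew sym t : Bool) : Hyp → Prop
  | id (n : ℕ) : Der cut ec ew sym t [({Fm.atom n}, {Fm.atom n})]
  | cutR (hc : cut = true) (G H : Hyp) (Γ Δ : Finset Fm) (φ : Fm) :
      Der cut ec ew sym t (G ++ [(Γ, insert φ Δ)] ++ H) →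
      Der cut ec ew sym t (G ++ [(insert φ Γ, Δ)] ++ H) →
      Der cut ec ew sym t (G ++ [(Γ, Δ)] ++ H)
  | ewl (G : Hyp) : Der cut ec ew sym t G → Der cut ec ew sym t ((∅, ∅) :: G)
  | ewr (G : Hyp) : Der cut ec ew sym t G → Der cut ec ew sym t (G ++ [(∅, ∅)])
  | tl (G H : Hyp) (Γ Δ : Finset Fm) (φ : Fm) :
      Der cut ec ew sym t (G ++ [(Γ, Δ)] ++ H) →
      Der cut ec ew sym t (G ++ [(insert φ Γ, Δ)] ++ H)
  | tr (G H : Hyp) (Γ Δ : Finset Fm) (φ : Fm) :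
      Der cut ec ew sym t (G ++ [(Γ, Δ)] ++ H) →
      Der cut ec ew sym t (G ++ [(Γ, insert φ Δ)] ++ H)
  | negL (G H : Hyp) (Γ Δ : Finset Fm) (φ : Fm) :
      Der cut ec ew sym t (G ++ [(Γ, insert φ Δ)] ++ H) →
      Der cut ec ew sym t (G ++ [(insert (.neg φ) Γ, Δ)] ++ H)
  | negR (G H : Hyp) (Γ Δ : Finset Fm) (φ : Fm) :
      Der cut ec ew sym t (G ++ [(insert φ Γ, Δ)] ++ H) →
      Der cut ec ew sym t (G ++ [(Γ, insert (.neg φ) Δ)] ++ H)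
  | andL1 (G H : Hyp) (Γ Δ : Finset Fm) (φ ψ : Fm) :
      Der cut ec ew sym t (G ++ [(insert φ Γ, Δ)] ++ H) →
      Der cut ec ew sym t (G ++ [(insert (.and φ ψ) Γ, Δ)] ++ H)
  | andL2 (G H : Hyp) (Γ Δ : Finset Fm) (φ ψ : Fm) :
      Der cut ec ew sym t (G ++ [(insert ψ Γ, Δ)] ++ H) →
      Der cut ec ew sym t (G ++ [(insert (.and φ ψ) Γ, Δ)] ++ H)
  | andR (G H : Hyp) (Γ Δ : Finset Fm) (φ ψ : Fm) :
      Der cut ec ew sym t (G ++ [(Γ, insert φ Δ)] ++ H) →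
      Der cut ec ew sym t (G ++ [(Γ, insert ψ Δ)] ++ H) →
      Der cut ec ew sym t (G ++ [(Γ, insert (.and φ ψ) Δ)] ++ H)
  | orL (G H : Hyp) (Γ Δ : Finset Fm) (φ ψ : Fm) :
      Der cut ec ew sym t (G ++ [(insert φ Γ, Δ)] ++ H) →
      Der cut ec ew sym t (G ++ [(insert ψ Γ, Δ)] ++ H) →
      Der cut ec ew sym t (G ++ [(insert (.or φ ψ) Γ, Δ)] ++ H)
  | orR1 (G H : Hyp) (Γ Δ : Finset Fm) (φ ψ : Fm) :
      Der cut ec ew sym t (G ++ [(Γ, insert φ Δ)] ++ H) →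
      Der cut ec ew sym t (G ++ [(Γ, insert (.or φ ψ) Δ)] ++ H)
  | orR2 (G H : Hyp) (Γ Δ : Finset Fm) (φ ψ : Fm) :
      Der cut ec ew sym t (G ++ [(Γ, insert ψ Δ)] ++ H) →
      Der cut ec ew sym t (G ++ [(Γ, insert (.or φ ψ) Δ)] ++ H)
  | boxL (G H : Hyp) (Γ Δ Sg Λ : Finset Fm) (φ : Fm) :
      Der cut ec ew sym t (G ++ [(Γ, Δ), (insert φ Sg, Λ)] ++ H) →
      Der cut ec ew sym t (G ++ [(insert (.box φ) Γ, Δ), (Sg, Λ)] ++ H)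
  | boxR (G : Hyp) (Γ Δ : Finset Fm) (φ : Fm) :
      Der cut ec ew sym t (G ++ [(Γ, Δ), (∅, {φ})]) →
      Der cut ec ew sym t (G ++ [(Γ, insert (.box φ) Δ)])
  | ecR (he : ec = true) (G H : Hyp) (Γ Δ : Finset Fm) :
      Der cut ec ew sym t (G ++ [(Γ, Δ), (Γ, Δ)] ++ H) →
      Der cut ec ew sym t (G ++ [(Γ, Δ)] ++ H)
  | ewRule (he : ew = true) (G H : Hyp) :
      Der cut ec ew sym t (G ++ H) →
      Der cut ec ew sym t (G ++ [(∅, ∅)] ++ H)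
  | symRule (hs : sym = true) (G : Hyp) :
      Der cut ec ew sym t G → Der cut ec ew sym t G.reverse
  | tRule (ht : t = true) (G H : Hyp) (Γ Δ : Finset Fm) (φ : Fm) :
      Der cut ec ew sym t (G ++ [(insert φ Γ, Δ)] ++ H) →
      Der cut ec ew sym t (G ++ [(insert (.box φ) Γ, Δ)] ++ H)

/-- PS4 frame conditions together with S information preservation for atoms. -/
def PS4Model {W : Type} (R S : W → W → Prop) (v : W → ℕ → Option Bool) : Prop :=
  (∀ x, S x x) ∧
  (∀ x, R x x) ∧
  (∀ x y z, R x y → R y z → ∃ w, R x w ∧ S z w) ∧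
  (∀ x y z, R x y → S x z → ∃ w, R z w ∧ S y w) ∧
  (∀ x z w, S x z → R z w → ∃ y, R x y ∧ S y w) ∧
  (∀ x y, S x y → ∀ n, (v x n).isSome → v y n = v x n)

/-- A point refutes a sequent in a three-valued model: antecedents have value 1,
succedents have value 0. -/
def Refutes3 {W : Type} (R : W → W → Prop) (v : W → ℕ → Option Bool) (S : HSeq) (w : W) : Prop :=
  (∀ φ ∈ S.1, Eval R v φ w = some true) ∧ (∀ φ ∈ S.2, Eval R v φ w = some false)

/-- A branch of R-related points starting at `w` countermodels the hypersequent
in a three-valued model. -/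
def Counter3 {W : Type} (R : W → W → Prop) (v : W → ℕ → Option Bool) : Hyp → W → Prop
  | [], _ => True
  | [S], w => Refutes3 R v S w
  | S :: S' :: rest, w => Refutes3 R v S w ∧ ∃ w', R w w' ∧ Counter3 R v (S' :: rest) w'

/-- Cut-free RS4: RK without Cut (Id, EWL, EWR, TL, TR, ¬,∧,∨ rules, □L, □R)
plus EC and EW. -/
abbrev RS4cf : Hyp → Prop := Der false true true false false

section Aux

variable {W : Type} (R S : W → W → Prop) (v : W → ℕ → Option Bool)

theorem skAnd_eq_true : ∀ a b, skAnd a b = some true ↔ a = some true ∧ b = some true := by decide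
theorem skAnd_eq_false : ∀ a b, skAnd a b = some false ↔ a = some false ∨ b = some false := by
  decide
theorem skOr_eq_true : ∀ a b, skOr a b = some true ↔ a = some true ∨ b = some true := by decide
theorem skOr_eq_false : ∀ a b, skOr a b = some false ↔ a = some false ∧ b = some false := by
  decide

theorem eval_neg (φ : Fm) (x : W) (b : Bool) :
    Eval R v (.neg φ) x = some b ↔ Eval R v φ x = some (!b) := by
  cases h : Eval R v φ x with
  | none => simp [Eval, h]
  | some c => cases b <;> cases c <;> simp [Eval, h]

theorem eval_and (φ ψ : Fm) (x : W) :
    Eval R v (.and φ ψ) x = skAnd (Eval R v φ x) (Eval R v ψ x) := by simp [Eval]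

theorem eval_or (φ ψ : Fm) (x : W) :
    Eval R v (.or φ ψ) x = skOr (Eval R v φ x) (Eval R v ψ x) := by simp [Eval]

theorem box_true {φ : Fm} {x : W} (h : Eval R v (.box φ) x = some true) :
    ∀ y, R x y → Eval R v φ y = some true := by
  by_cases h1 : ∀ y, R x y → Eval R v φ y = some true
  · exact h1
  · exfalso; by_cases h2 : ∃ y, R x y ∧ Eval R v φ y = some false <;>
      simp [Eval, h1, h2] at h

theorem box_false {φ : Fm} {x : W} (h : Eval R v (.box φ) x = some false) :
    ∃ y, R x y ∧ Eval R v φ y = some false := by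
  by_cases h2 : ∃ y, R x y ∧ Eval R v φ y = some false
  · exact h2
  · exfalso; by_cases h1 : ∀ y, R x y → Eval R v φ y = some true <;>
      simp [Eval, h1, h2] at h

/-- The "uniform" countermodel predicate: like `Counter3` but always demanding an
`R`-successor (equivalent when `R` is reflexive). -/
def CC : Hyp → W → Prop
  | [], _ => True
  | Sq :: L, w => Refutes3 R v Sq w ∧ ∃ w', R w w' ∧ CC L w'

/-- `Chain G w u`: a countermodel chain for `G` starting at `w`, whose final
`R`-step lands at `u` (for `G = []`, `u = w`). -/
def Chain : Hyp → W → W → Prop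
  | [], w, u => u = w
  | Sq :: L, w, u => Refutes3 R v Sq w ∧ ∃ w', R w w' ∧ Chain L w' u

variable {R S v}

theorem counter3_iff_CC (hrefl : ∀ x, R x x) :
    ∀ (H : Hyp) (w : W), Counter3 R v H w ↔ CC R v H w
  | [], _ => Iff.rfl
  | [Sq], w => by
      constructor
      · exact fun h => ⟨h, w, hrefl w, trivial⟩
      · exact fun h => h.1
  | Sq :: Sq' :: rest, w =>
      and_congr Iff.rfl (exists_congr fun w' =>
        and_congr Iff.rfl (counter3_iff_CC hrefl (Sq' :: rest) w'))

theorem CC_append : ∀ (G H : Hyp) (w : W),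
    CC R v (G ++ H) w ↔ ∃ u, Chain R v G w u ∧ CC R v H u
  | [], H, w => by
      simp only [List.nil_append]
      constructor
      · exact fun h => ⟨w, rfl, h⟩
      · rintro ⟨u, rfl, h⟩; exact h
  | Sq :: G, H, w => by
      simp only [List.cons_append]
      show (Refutes3 R v Sq w ∧ ∃ w', R w w' ∧ CC R v (G ++ H) w') ↔ _
      constructor
      · rintro ⟨h1, w', hw', h2⟩
        obtain ⟨u, hc, hH⟩ := (CC_append G H w').mp h2
        exact ⟨u, ⟨h1, w', hw', hc⟩, hH⟩
      · rintro ⟨u, ⟨h1, w', hw', hc⟩, hH⟩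
        exact ⟨h1, w', hw', (CC_append G H w').mpr ⟨u, hc, hH⟩⟩

theorem chain_CC : ∀ (G : Hyp) (w u : W), Chain R v G w u → CC R v G w
  | [], _, _, _ => trivial
  | Sq :: G, w, u, h => by
      obtain ⟨h1, w', hw', hc⟩ := h
      exact ⟨h1, w', hw', chain_CC G w' u hc⟩

theorem eval_pres (hM : PS4Model R S v) :
    ∀ (φ : Fm) (x y : W), S x y → ∀ b, Eval R v φ x = some b → Eval R v φ y = some b := by
  obtain ⟨hSrefl, hRrefl, hPT, hForth, hBack, hAtom⟩ := hM
  intro φ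
  induction φ with
  | atom n =>
      intro x y hS b hb
      simp only [Eval] at hb ⊢
      rw [hAtom x y hS n (by rw [hb]; rfl), hb]
  | neg φ ih =>
      intro x y hS b hb
      rw [eval_neg] at hb ⊢
      exact ih x y hS _ hb
  | and φ ψ ihφ ihψ =>
      intro x y hS b hb
      rw [eval_and] at hb ⊢
      cases b with
      | true =>
          rw [skAnd_eq_true] at hb ⊢
          exact ⟨ihφ x y hS _ hb.1, ihψ x y hS _ hb.2⟩
      | false =>
          rw [skAnd_eq_false] at hb ⊢
          rcases hb with h | h
          · exact Or.inl (ihφ x y hS _ h)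
          · exact Or.inr (ihψ x y hS _ h)
  | or φ ψ ihφ ihψ =>
      intro x y hS b hb
      rw [eval_or] at hb ⊢
      cases b with
      | true =>
          rw [skOr_eq_true] at hb ⊢
          rcases hb with h | h
          · exact Or.inl (ihφ x y hS _ h)
          · exact Or.inr (ihψ x y hS _ h)
      | false =>
          rw [skOr_eq_false] at hb ⊢
          exact ⟨ihφ x y hS _ hb.1, ihψ x y hS _ hb.2⟩
  | box φ ih =>
      intro x y hS b hb
      cases b with
      | true =>
          have h1 := box_true R v hb
          have h1y : ∀ z, R y z → Eval R v φ z = some true := by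
            intro z hz
            obtain ⟨u, hxu, huz⟩ := hBack x y z hS hz
            exact ih u z huz true (h1 u hxu)
          simp only [Eval]
          exact if_pos h1y
      | false =>
          obtain ⟨z, hxz, hz⟩ := box_false R v hb
          obtain ⟨z', hyz', hzz'⟩ := hForth x z y hxz hS
          have hz' := ih z z' hzz' false hz
          have hn1 : ¬ ∀ u, R y u → Eval R v φ u = some true := by
            intro h
            have := h z' hyz'
            rw [hz'] at this; cases this
          simp only [Eval, if_neg hn1]
          rw [if_pos ⟨z', hyz', hz'⟩]

theorem refutes_pres (hM : PS4Model R S v) {x y : W} (hS : S x y) {Sq : HSeq}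
    (h : Refutes3 R v Sq x) : Refutes3 R v Sq y :=
  ⟨fun φ hφ => eval_pres hM φ x y hS true (h.1 φ hφ),
   fun φ hφ => eval_pres hM φ x y hS false (h.2 φ hφ)⟩

theorem CC_pres (hM : PS4Model R S v) :
    ∀ (H : Hyp) (x y : W), S x y → CC R v H x → CC R v H y := by
  intro H
  induction H with
  | nil => intro _ _ _ _; trivial
  | cons Sq L ih =>
      rintro x y hS ⟨h1, x', hx', h2⟩
      obtain ⟨y', hy', hS'⟩ := hM.2.2.2.1 x x' y hx' hS
      exact ⟨refutes_pres hM hS h1, y', hy', ih x' y' hS' h2⟩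

theorem chain_retarget (hM : PS4Model R S v) :
    ∀ (L : Hyp) (Sq : HSeq) (w u y : W), Chain R v (Sq :: L) w u → R u y →
      ∃ u', S y u' ∧ Chain R v (Sq :: L) w u' := by
  intro L
  induction L with
  | nil =>
      intro Sq w u y hch huy
      simp only [Chain] at hch
      obtain ⟨h1, w', hw', hu⟩ := hch
      subst hu
      obtain ⟨u', hwu', hyu'⟩ := hM.2.2.1 w u y hw' huy
      refine ⟨u', hyu', h1, u', hwu', ?_⟩
      rfl
  | cons Sq2 L ih =>
      intro Sq w u y hch huy
      simp only [Chain] at hch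
      obtain ⟨h1, w', hw', hc⟩ := hch
      obtain ⟨u', hyu', hc'⟩ := ih Sq2 w' u y hc huy
      exact ⟨u', hyu', h1, w', hw', hc'⟩

/-- One-premise local step on the distinguished sequent. -/
theorem local1 (G H : Hyp) (A B : HSeq) (w : W)
    (hs : ∀ u : W, Refutes3 R v A u → Refutes3 R v B u)
    (h : CC R v (G ++ [A] ++ H) w) : CC R v (G ++ [B] ++ H) w := by
  rw [List.append_assoc] at h ⊢
  rw [CC_append] at h ⊢
  obtain ⟨u, hch, h1, y, hy, hH⟩ := h
  exact ⟨u, hch, hs u h1, y, hy, hH⟩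

/-- Two-premise local step on the distinguished sequent. -/
theorem local2 (G H : Hyp) (A B1 B2 : HSeq) (w : W)
    (hs : ∀ u : W, Refutes3 R v A u → Refutes3 R v B1 u ∨ Refutes3 R v B2 u)
    (h : CC R v (G ++ [A] ++ H) w) :
    CC R v (G ++ [B1] ++ H) w ∨ CC R v (G ++ [B2] ++ H) w := by
  rw [List.append_assoc] at h ⊢
  rw [CC_append] at h
  obtain ⟨u, hch, h1, y, hy, hH⟩ := h
  rcases hs u h1 with h' | h'
  · left; rw [CC_append]; exact ⟨u, hch, h', y, hy, hH⟩
  · right; rw [List.append_assoc, CC_append]; exact ⟨u, hch, h', y, hy, hH⟩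

end Aux

/-- Cut-free RS4 is sound with respect to PS4 models: a cut-free
derivable hypersequent has no countermodel in any PS4 model. -/
theorem RS4cf_sound_PS4 :
    ∀ H : Hyp, RS4cf H →
      ∀ (W : Type) (R S : W → W → Prop) (v : W → ℕ → Option Bool),
        PS4Model R S v → ∀ w : W, ¬ Counter3 R v H w := by
  intro H hder W R S v hM w
  obtain ⟨hSrefl, hRrefl, hPT, hForth, hBack, hAtom⟩ := id hM
  have cv : ∀ (L : Hyp) (w : W), Counter3 R v L w ↔ CC R v L w := counter3_iff_CC hRrefl
  induction hder generalizing w with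
  | id n =>
      intro hc
      have hc' : Refutes3 R v ({Fm.atom n}, {Fm.atom n}) w := hc
      have h1 := hc'.1 (Fm.atom n) (Finset.mem_singleton_self _)
      have h2 := hc'.2 (Fm.atom n) (Finset.mem_singleton_self _)
      rw [h1] at h2
      cases h2
  | cutR hcut => exact absurd hcut (by decide)
  | symRule hs => exact absurd hs (by decide)
  | tRule ht => exact absurd ht (by decide)
  | ewl G _ ih =>
      intro hc
      obtain ⟨-, w', hw', hG⟩ := (cv _ w).mp hc
      exact ih w' ((cv G w').mpr hG)
  | ewr G _ ih =>
      intro hc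
      have hc' := (cv _ w).mp hc
      rw [CC_append] at hc'
      obtain ⟨u, hch, -⟩ := hc'
      exact ih w ((cv G w).mpr (chain_CC G w u hch))
  | tl G H Γ Δ φ _ ih =>
      intro hc
      refine ih w ((cv _ w).mpr (local1 G H _ _ w (fun u hu => ?_) ((cv _ w).mp hc)))
      exact ⟨fun ψ hψ => hu.1 ψ (Finset.mem_insert_of_mem hψ), hu.2⟩
  | tr G H Γ Δ φ _ ih =>
      intro hc
      refine ih w ((cv _ w).mpr (local1 G H _ _ w (fun u hu => ?_) ((cv _ w).mp hc)))
      exact ⟨hu.1, fun ψ hψ => hu.2 ψ (Finset.mem_insert_of_mem hψ)⟩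
  | negL G H Γ Δ φ _ ih =>
      intro hc
      refine ih w ((cv _ w).mpr (local1 G H _ _ w (fun u hu => ?_) ((cv _ w).mp hc)))
      have hφ : Eval R v φ u = some false := by
        have := hu.1 _ (Finset.mem_insert_self _ _)
        rw [eval_neg] at this
        simpa using this
      refine ⟨fun ψ hψ => hu.1 ψ (Finset.mem_insert_of_mem hψ), fun ψ hψ => ?_⟩
      rcases Finset.mem_insert.mp hψ with rfl | hψ
      · exact hφ
      · exact hu.2 ψ hψ
  | negR G H Γ Δ φ _ ih =>
      intro hc
      refine ih w ((cv _ w).mpr (local1 G H _ _ w (fun u hu => ?_) ((cv _ w).mp hc)))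
      have hφ : Eval R v φ u = some true := by
        have := hu.2 _ (Finset.mem_insert_self _ _)
        rw [eval_neg] at this
        simpa using this
      refine ⟨fun ψ hψ => ?_, fun ψ hψ => hu.2 ψ (Finset.mem_insert_of_mem hψ)⟩
      rcases Finset.mem_insert.mp hψ with rfl | hψ
      · exact hφ
      · exact hu.1 ψ hψ
  | andL1 G H Γ Δ φ ψ0 _ ih =>
      intro hc
      refine ih w ((cv _ w).mpr (local1 G H _ _ w (fun u hu => ?_) ((cv _ w).mp hc)))
      have hφ : Eval R v φ u = some true := by
        have := hu.1 _ (Finset.mem_insert_self _ _)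
        rw [eval_and, skAnd_eq_true] at this
        exact this.1
      refine ⟨fun χ hχ => ?_, hu.2⟩
      rcases Finset.mem_insert.mp hχ with rfl | hχ
      · exact hφ
      · exact hu.1 χ (Finset.mem_insert_of_mem hχ)
  | andL2 G H Γ Δ φ ψ0 _ ih =>
      intro hc
      refine ih w ((cv _ w).mpr (local1 G H _ _ w (fun u hu => ?_) ((cv _ w).mp hc)))
      have hφ : Eval R v ψ0 u = some true := by
        have := hu.1 _ (Finset.mem_insert_self _ _)
        rw [eval_and, skAnd_eq_true] at this
        exact this.2
      refine ⟨fun χ hχ => ?_, hu.2⟩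
      rcases Finset.mem_insert.mp hχ with rfl | hχ
      · exact hφ
      · exact hu.1 χ (Finset.mem_insert_of_mem hχ)
  | andR G H Γ Δ φ ψ0 _ _ ih1 ih2 =>
      intro hc
      have hloc := local2 G H _ (Γ, insert φ Δ) (Γ, insert ψ0 Δ) w (fun u hu => by
        have hb := hu.2 _ (Finset.mem_insert_self _ _)
        rw [eval_and, skAnd_eq_false] at hb
        rcases hb with hb | hb
        · left
          refine ⟨hu.1, fun χ hχ => ?_⟩
          rcases Finset.mem_insert.mp hχ with rfl | hχ
          · exact hb
          · exact hu.2 χ (Finset.mem_insert_of_mem hχ)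
        · right
          refine ⟨hu.1, fun χ hχ => ?_⟩
          rcases Finset.mem_insert.mp hχ with rfl | hχ
          · exact hb
          · exact hu.2 χ (Finset.mem_insert_of_mem hχ)) ((cv _ w).mp hc)
      rcases hloc with h | h
      · exact ih1 w ((cv _ w).mpr h)
      · exact ih2 w ((cv _ w).mpr h)
  | orL G H Γ Δ φ ψ0 _ _ ih1 ih2 =>
      intro hc
      have hloc := local2 G H _ (insert φ Γ, Δ) (insert ψ0 Γ, Δ) w (fun u hu => by
        have hb := hu.1 _ (Finset.mem_insert_self _ _)
        rw [eval_or, skOr_eq_true] at hb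
        rcases hb with hb | hb
        · left
          refine ⟨fun χ hχ => ?_, hu.2⟩
          rcases Finset.mem_insert.mp hχ with rfl | hχ
          · exact hb
          · exact hu.1 χ (Finset.mem_insert_of_mem hχ)
        · right
          refine ⟨fun χ hχ => ?_, hu.2⟩
          rcases Finset.mem_insert.mp hχ with rfl | hχ
          · exact hb
          · exact hu.1 χ (Finset.mem_insert_of_mem hχ)) ((cv _ w).mp hc)
      rcases hloc with h | h
      · exact ih1 w ((cv _ w).mpr h)
      · exact ih2 w ((cv _ w).mpr h)
  | orR1 G H Γ Δ φ ψ0 _ ih =>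
      intro hc
      refine ih w ((cv _ w).mpr (local1 G H _ _ w (fun u hu => ?_) ((cv _ w).mp hc)))
      have hb := hu.2 _ (Finset.mem_insert_self _ _)
      rw [eval_or, skOr_eq_false] at hb
      refine ⟨hu.1, fun χ hχ => ?_⟩
      rcases Finset.mem_insert.mp hχ with rfl | hχ
      · exact hb.1
      · exact hu.2 χ (Finset.mem_insert_of_mem hχ)
  | orR2 G H Γ Δ φ ψ0 _ ih =>
      intro hc
      refine ih w ((cv _ w).mpr (local1 G H _ _ w (fun u hu => ?_) ((cv _ w).mp hc)))
      have hb := hu.2 _ (Finset.mem_insert_self _ _)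
      rw [eval_or, skOr_eq_false] at hb
      refine ⟨hu.1, fun χ hχ => ?_⟩
      rcases Finset.mem_insert.mp hχ with rfl | hχ
      · exact hb.2
      · exact hu.2 χ (Finset.mem_insert_of_mem hχ)
  | boxL G H Γ Δ Sg Λ φ _ ih =>
      intro hc
      have hc' := (cv _ w).mp hc
      rw [List.append_assoc, CC_append] at hc'
      obtain ⟨u, hch, h1, y, huy, h2, z, hyz, hH⟩ := hc'
      have hb : Eval R v (.box φ) u = some true := h1.1 _ (Finset.mem_insert_self _ _)
      refine ih w ((cv _ w).mpr ?_)
      rw [List.append_assoc, CC_append]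
      refine ⟨u, hch, ⟨fun χ hχ => h1.1 χ (Finset.mem_insert_of_mem hχ), h1.2⟩,
        y, huy, ⟨fun χ hχ => ?_, h2.2⟩, z, hyz, hH⟩
      rcases Finset.mem_insert.mp hχ with rfl | hχ
      · exact box_true R v hb y huy
      · exact h2.1 χ hχ
  | boxR G Γ Δ φ _ ih =>
      intro hc
      have hc' := (cv _ w).mp hc
      rw [CC_append] at hc'
      obtain ⟨u, hch, h1, -⟩ := hc'
      have hb : Eval R v (.box φ) u = some false := h1.2 _ (Finset.mem_insert_self _ _)
      obtain ⟨y, huy, hy⟩ := box_false R v hb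
      refine ih w ((cv _ w).mpr ?_)
      rw [CC_append]
      refine ⟨u, hch, ⟨h1.1, fun χ hχ => h1.2 χ (Finset.mem_insert_of_mem hχ)⟩,
        y, huy, ⟨fun χ hχ => absurd hχ (Finset.notMem_empty χ), fun χ hχ => ?_⟩,
        y, hRrefl y, trivial⟩
      rw [Finset.mem_singleton] at hχ
      subst hχ
      exact hy
  | ecR _ G H Γ Δ _ ih =>
      intro hc
      have hc' := (cv _ w).mp hc
      rw [List.append_assoc, CC_append] at hc'
      obtain ⟨u, hch, h1, y, huy, hH⟩ := hc'
      refine ih w ((cv _ w).mpr ?_)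
      rw [List.append_assoc, CC_append]
      exact ⟨u, hch, h1, u, hRrefl u, h1, y, huy, hH⟩
  | ewRule _ G H _ ih =>
      intro hc
      have hc' := (cv _ w).mp hc
      rw [List.append_assoc, CC_append] at hc'
      obtain ⟨u, hch, -, y, huy, hH⟩ := hc'
      cases G with
      | nil =>
          exact ih y ((cv _ y).mpr hH)
      | cons g G' =>
          obtain ⟨u', hyu', hch'⟩ := chain_retarget hM G' g w u y hch huy
          have hHu' := CC_pres hM H y u' hyu' hH
          refine ih w ((cv _ w).mpr ?_)
          rw [CC_append]
          exact ⟨u', hch', hHu'⟩
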